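/- Let G be a symmetric n×n integer matrix. Suppose φ : ℂ × ℂⁿ → ℂ is holomorphic on Ω = {(τ,z) : Im τ > 0}, is not identically zero on Ω, and satisfies, for all x, y ∈ ℤⁿ and all (τ,z) ∈ Ω, the elliptic transformation law φ(τ, z + τ·x + y) · exp(πi·τ·xᵀGx + 2πi·xᵀGz) = exp(πi·(x+y)ᵀG(x+y)) · φ(τ, z). Then G, viewed as a real matrix, is positive semidefinite (i.e. vᵀGv ≥ 0 for all v ∈ ℝⁿ). -/

import Mathlib

/-!
If `xᵀGx = q < 0` for an integer vector `x`, restrict `φ` to the complex line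
`g w = φ (τ, z₀ + w • x)` through a point where `φ ≠ 0`. The transformation law for the
translations by `(0, x)` and `(x, 0)` says that `‖g‖` is invariant under `w ↦ w + 1` and gets
multiplied by `exp (a + 2πq · Im w)` under `w ↦ w + τ`. Hence
`‖g w‖ · exp (γ (Im w)² + δ Im w)`, with `γ = -πq / Im τ > 0` and a suitable `δ`, is doubly
periodic and therefore bounded. So `g` is bounded, constant by Liouville's theorem, and has
Gaussian decay along the imaginary axis, which forces `g = 0`, a contradiction.
Thus the quadratic form of `G` is nonnegative on `ℤⁿ`, hence on `N⁻¹ℤⁿ` by homogeneity, and on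
`ℝⁿ` by continuity, approximating `v` by `N⁻¹⌊N v⌋`.
-/

open Matrix Filter Topology Complex

theorem tendsto_int_floor_mul_div_atTop {R : Type*} [TopologicalSpace R] [Field R] [LinearOrder R]
    [IsStrictOrderedRing R] [OrderTopology R] [FloorRing R] (a : R) :
    Tendsto (fun x ↦ (⌊a * x⌋ : R) / x) atTop (𝓝 a) := by
  have hlower : Tendsto (fun x : R ↦ a - x⁻¹) atTop (𝓝 (a - 0)) :=
    tendsto_const_nhds.sub tendsto_inv_atTop_zero
  rw [sub_zero] at hlower
  apply tendsto_of_tendsto_of_tendsto_of_le_of_le' hlower tendsto_const_nhds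
  · filter_upwards [eventually_gt_atTop 0] with x hx
    rw [le_div_iff₀ hx, sub_mul, inv_mul_cancel₀ hx.ne']
    linarith [Int.lt_floor_add_one (a * x)]
  · filter_upwards [eventually_gt_atTop 0] with x hx
    rw [div_le_iff₀ hx]
    exact Int.floor_le _

theorem dotProduct_mulVec_self_nonneg_of_forall_intCast {ι : Type*} [Fintype ι]
    (A : Matrix ι ι ℝ)
    (h : ∀ x : ι → ℤ, 0 ≤ (fun i ↦ (x i : ℝ)) ⬝ᵥ A *ᵥ fun i ↦ (x i : ℝ)) (v : ι → ℝ) :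
    0 ≤ v ⬝ᵥ A *ᵥ v := by
  set u : ℕ → ι → ℝ := fun N i ↦ (⌊v i * N⌋ : ℝ) / N
  have hu : Tendsto u atTop (𝓝 v) := tendsto_pi_nhds.2 fun i ↦
    (tendsto_int_floor_mul_div_atTop (v i)).comp tendsto_natCast_atTop_atTop
  have hQ : Continuous fun w : ι → ℝ ↦ w ⬝ᵥ A *ᵥ w := by fun_prop
  refine ge_of_tendsto' ((hQ.tendsto v).comp hu) fun N ↦ ?_
  have hsmul : u N = (N : ℝ)⁻¹ • fun i ↦ ((⌊v i * N⌋ : ℤ) : ℝ) := by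
    ext i; simp [u, div_eq_inv_mul]
  simp only [Function.comp_apply, hsmul, mulVec_smul, dotProduct_smul, smul_dotProduct,
    smul_eq_mul, ← mul_assoc]
  exact mul_nonneg (mul_self_nonneg _) (h _)

theorem Complex.linearIndependent_one_of_im_ne_zero {τ : ℂ} (hτ : τ.im ≠ 0) :
    LinearIndependent ℝ ![1, τ] := by
  refine LinearIndependent.pair_iff.2 fun s t hst ↦ ?_
  have him := congrArg Complex.im hst
  have hre := congrArg Complex.re hst
  simp only [Complex.real_smul, Complex.add_im, Complex.mul_im, Complex.ofReal_re,
    Complex.ofReal_im, Complex.one_im, Complex.one_re, Complex.zero_im] at him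
  have ht : t = 0 := by simpa [hτ] using him
  subst ht
  simpa using hre

theorem Complex.isCompact_range_of_periodic {X : Type*} [TopologicalSpace X] {f : ℂ → X}
    {τ : ℂ} (hτ : τ.im ≠ 0) (hf : Continuous f) (h1 : Function.Periodic f 1)
    (hτf : Function.Periodic f τ) : IsCompact (Set.range f) := by
  let L : PeriodPair := ⟨1, τ, linearIndependent_one_of_im_ne_zero hτ⟩
  refine IsZLattice.isCompact_range_of_periodic L.lattice f hf fun z w hw ↦ ?_
  obtain ⟨m, k, rfl⟩ := PeriodPair.mem_lattice.1 hw
  rw [← add_assoc, hτf.int_mul k, h1.int_mul m]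

theorem exists_norm_le_gaussian_of_norm_quasiperiodic {g : ℂ → ℂ} {τ : ℂ} {a b : ℝ}
    (hτ : 0 < τ.im) (hb : b < 0) (hg : Continuous g) (h1 : ∀ w, ‖g (w + 1)‖ = ‖g w‖)
    (hτg : ∀ w, ‖g (w + τ)‖ = ‖g w‖ * Real.exp (a + b * w.im)) :
    ∃ C γ δ : ℝ, 0 < γ ∧ ∀ w, ‖g w‖ ≤ C * Real.exp (-(γ * w.im ^ 2 + δ * w.im)) := by
  set t := τ.im
  set γ := -b / (2 * t)
  set δ := -(a + γ * t ^ 2) / t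
  set H : ℂ → ℝ := fun w ↦ ‖g w‖ * Real.exp (γ * w.im ^ 2 + δ * w.im)
  have hH1 : Function.Periodic H 1 := fun w ↦ by simp [H, h1]
  have hHτ : Function.Periodic H τ := fun w ↦ by
    simp only [H, hτg, Complex.add_im, mul_assoc, ← Real.exp_add]
    congr 2
    simp only [γ, δ]
    field_simp
    ring
  obtain ⟨C, hC⟩ := (Complex.isCompact_range_of_periodic hτ.ne' (by fun_prop) hH1 hHτ).bddAbove
  refine ⟨C, γ, δ, div_pos (neg_pos.2 hb) (by positivity), fun w ↦ ?_⟩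
  calc ‖g w‖ = H w * Real.exp (-(γ * w.im ^ 2 + δ * w.im)) := by
        simp only [H, mul_assoc, ← Real.exp_add, add_neg_cancel, Real.exp_zero, mul_one]
    _ ≤ C * Real.exp (-(γ * w.im ^ 2 + δ * w.im)) := by
        gcongr
        exact hC ⟨w, rfl⟩

theorem eq_zero_of_norm_le_gaussian {g : ℂ → ℂ} {C γ δ : ℝ} (hg : Differentiable ℂ g)
    (hγ : 0 < γ) (hbound : ∀ w, ‖g w‖ ≤ C * Real.exp (-(γ * w.im ^ 2 + δ * w.im))) :
    g = 0 := by
  have hquad : ∀ s : ℝ, -(γ * s ^ 2 + δ * s) ≤ δ ^ 2 / (4 * γ) := fun s ↦ by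
    rw [le_div_iff₀ (by positivity)]
    nlinarith [sq_nonneg (2 * γ * s + δ)]
  have hC : 0 ≤ C := by
    have := (norm_nonneg _).trans (hbound 0)
    exact nonneg_of_mul_nonneg_left this (Real.exp_pos _)
  have hbdd : Bornology.IsBounded (Set.range g) := by
    refine isBounded_iff_forall_norm_le.2 ⟨C * Real.exp (δ ^ 2 / (4 * γ)), ?_⟩
    rintro _ ⟨w, rfl⟩
    exact (hbound w).trans (by gcongr; exact hquad _)
  have hlim : Tendsto (fun s : ℝ ↦ C * Real.exp (-(γ * s ^ 2 + δ * s))) atTop (𝓝 0) := by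
    have hq : Tendsto (fun s : ℝ ↦ γ * s ^ 2 + δ * s) atTop atTop :=
      (tendsto_id.atTop_mul_atTop₀ (tendsto_atTop_add_const_right _ δ
        (tendsto_id.const_mul_atTop hγ))).congr fun s ↦ by simp only [id]; ring
    simpa using (Real.tendsto_exp_atBot.comp (tendsto_neg_atTop_atBot.comp hq)).const_mul C
  funext w
  refine norm_le_zero_iff.1 (ge_of_tendsto' hlim fun s ↦ ?_)
  rw [hg.apply_eq_apply_of_bounded hbdd w (s * I)]
  simpa using hbound (s * I)

theorem eq_zero_of_norm_quasiperiodic {g : ℂ → ℂ} {τ : ℂ} {a b : ℝ}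
    (hτ : 0 < τ.im) (hb : b < 0) (hg : Differentiable ℂ g) (h1 : ∀ w, ‖g (w + 1)‖ = ‖g w‖)
    (hτg : ∀ w, ‖g (w + τ)‖ = ‖g w‖ * Real.exp (a + b * w.im)) : g = 0 := by
  obtain ⟨C, γ, δ, hγ, hbound⟩ :=
    exists_norm_le_gaussian_of_norm_quasiperiodic hτ hb hg.continuous h1 hτg
  exact eq_zero_of_norm_le_gaussian hg hγ hbound

variable {ι : Type*} [Fintype ι]

def SatisfiesEllipticLaw (G : Matrix ι ι ℤ) (φ : ℂ × (ι → ℂ) → ℂ) : Prop :=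
  ∀ (x y : ι → ℤ) (τ : ℂ) (z : ι → ℂ), 0 < τ.im →
    φ (τ, z + τ • (fun i => (x i : ℂ)) + (fun i => (y i : ℂ))) *
        Complex.exp ((Real.pi : ℂ) * Complex.I * τ * (((x ⬝ᵥ G.mulVec x) : ℤ) : ℂ)
          + 2 * (Real.pi : ℂ) * Complex.I *
            ((fun i => (x i : ℂ)) ⬝ᵥ (G.map (Int.cast : ℤ → ℂ)).mulVec z)) =
      Complex.exp ((Real.pi : ℂ) * Complex.I *
          ((((x + y) ⬝ᵥ G.mulVec (x + y)) : ℤ) : ℂ)) * φ (τ, z)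

theorem intCast_dotProduct_map_mulVec {R : Type*} [CommRing R] (G : Matrix ι ι ℤ)
    (x y : ι → ℤ) :
    (fun i ↦ (x i : R)) ⬝ᵥ G.map (Int.cast : ℤ → R) *ᵥ (fun i ↦ (y i : R)) =
      ((x ⬝ᵥ G *ᵥ y : ℤ) : R) := by
  simp [dotProduct, mulVec, Finset.mul_sum]

namespace SatisfiesEllipticLaw

variable {G : Matrix ι ι ℤ} {φ : ℂ × (ι → ℂ) → ℂ} {τ : ℂ}

theorem norm_add_intCast (hell : SatisfiesEllipticLaw G φ) (hτ : 0 < τ.im) (z : ι → ℂ)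
    (y : ι → ℤ) : ‖φ (τ, z + fun i ↦ (y i : ℂ))‖ = ‖φ (τ, z)‖ := by
  have h := congrArg norm (hell 0 y τ z hτ)
  simpa [Complex.norm_exp, ← Pi.zero_def] using h

theorem norm_add_smul_intCast (hell : SatisfiesEllipticLaw G φ) (hτ : 0 < τ.im) (z : ι → ℂ)
    (x : ι → ℤ) :
    ‖φ (τ, z + τ • fun i ↦ (x i : ℂ))‖ = ‖φ (τ, z)‖ * Real.exp (Real.pi * (x ⬝ᵥ G *ᵥ x : ℤ) * τ.im
      + 2 * Real.pi * ((fun i ↦ (x i : ℂ)) ⬝ᵥ G.map (Int.cast : ℤ → ℂ) *ᵥ z).im) := by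
  have h := congrArg norm (hell x 0 τ z hτ)
  simp only [Pi.zero_apply, Int.cast_zero, ← Pi.zero_def, add_zero, Complex.norm_mul, norm_exp,
    add_re, mul_re, ofReal_re, I_re, mul_zero, ofReal_im, I_im, mul_one, sub_self, zero_mul, mul_im,
    zero_sub, intCast_re, neg_mul, zero_add, intCast_im, sub_zero, re_ofNat, im_ofNat,
    Real.exp_zero, one_mul] at h
  rw [← h, mul_assoc, ← Real.exp_add]
  ring_nf
  rw [Real.exp_zero, mul_one]

theorem dotProduct_mulVec_nonneg (hell : SatisfiesEllipticLaw G φ)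
    (hol : DifferentiableOn ℂ φ {p : ℂ × (ι → ℂ) | 0 < p.1.im})
    (hne : ∃ p : ℂ × (ι → ℂ), 0 < p.1.im ∧ φ p ≠ 0) (x : ι → ℤ) : 0 ≤ x ⬝ᵥ G *ᵥ x := by
  obtain ⟨⟨τ, z₀⟩, hτ : 0 < τ.im, hφ⟩ := hne
  by_contra! hx
  set xc : ι → ℂ := fun i ↦ (x i : ℂ)
  set q : ℝ := ((x ⬝ᵥ G *ᵥ x : ℤ) : ℝ)
  set g : ℂ → ℂ := fun w ↦ φ (τ, z₀ + w • xc)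
  have hU : IsOpen {p : ℂ × (ι → ℂ) | 0 < p.1.im} := isOpen_lt continuous_const (by fun_prop)
  have hg : Differentiable ℂ g := fun w ↦
    (hol.differentiableAt (hU.mem_nhds (x := (τ, z₀ + w • xc)) hτ)).comp w (by fun_prop)
  have h1 : ∀ w, ‖g (w + 1)‖ = ‖g w‖ := fun w ↦ by
    simpa [g, add_smul, add_assoc] using hell.norm_add_intCast hτ (z₀ + w • xc) x
  have hτg : ∀ w, ‖g (w + τ)‖ = ‖g w‖ * Real.exp (Real.pi * q * τ.im
      + 2 * Real.pi * (xc ⬝ᵥ G.map (Int.cast : ℤ → ℂ) *ᵥ z₀).im + 2 * Real.pi * q * w.im) := by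
    intro w
    have h := hell.norm_add_smul_intCast hτ (z₀ + w • xc) x
    rw [mulVec_add, dotProduct_add, mulVec_smul, dotProduct_smul, intCast_dotProduct_map_mulVec,
      smul_eq_mul] at h
    rw [show g (w + τ) = φ (τ, z₀ + w • xc + τ • xc) by simp only [g, add_smul, add_assoc], h]
    congr 2
    simp only [Complex.add_im, Complex.mul_im, Complex.intCast_re, Complex.intCast_im, q]
    ring
  have hb : 2 * Real.pi * q < 0 :=
    mul_neg_of_pos_of_neg (by positivity) (Int.cast_lt_zero.2 hx)
  exact hφ (by simpa [g] using congrFun (eq_zero_of_norm_quasiperiodic hτ hb hg h1 hτg) 0)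

end SatisfiesEllipticLaw

theorem posSemidef_of_elliptic_transformation
    {n : ℕ} (G : Matrix (Fin n) (Fin n) ℤ)
    (φ : ℂ × (Fin n → ℂ) → ℂ)
    (hol : DifferentiableOn ℂ φ {p : ℂ × (Fin n → ℂ) | 0 < p.1.im})
    (hne : ∃ p : ℂ × (Fin n → ℂ), 0 < p.1.im ∧ φ p ≠ 0)
    (hell : ∀ (x y : Fin n → ℤ) (τ : ℂ) (z : Fin n → ℂ), 0 < τ.im →
      φ (τ, z + τ • (fun i => (x i : ℂ)) + (fun i => (y i : ℂ))) *
          Complex.exp ((Real.pi : ℂ) * Complex.I * τ * (((x ⬝ᵥ G.mulVec x) : ℤ) : ℂ)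
            + 2 * (Real.pi : ℂ) * Complex.I *
              ((fun i => (x i : ℂ)) ⬝ᵥ (G.map (Int.cast : ℤ → ℂ)).mulVec z)) =
        Complex.exp ((Real.pi : ℂ) * Complex.I *
            ((((x + y) ⬝ᵥ G.mulVec (x + y)) : ℤ) : ℂ)) * φ (τ, z)) :
    ∀ v : Fin n → ℝ, 0 ≤ v ⬝ᵥ (G.map (Int.cast : ℤ → ℝ)).mulVec v :=
  dotProduct_mulVec_self_nonneg_of_forall_intCast _ fun x ↦ by
    rw [intCast_dotProduct_map_mulVec]
    exact_mod_cast SatisfiesEllipticLaw.dotProduct_mulVec_nonneg hell hol hne x
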